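/- arXiv:2408.13547 — 3 statements merged into one kernel-verified Lean document; each statement's English description precedes it below -/
import Mathlib

section
/- (Convergence of cyclic Frontal Slice Descent; Theorem 4.1 of the paper, matrix form.) In the matrix FSD setup, if the learning rate α satisfies κ + α · μ · (n−1) < 1, then the approximation error converges to zero: lim_{t→∞} E(t) = lim_{t→∞} ‖X(t) − X*‖_F = 0. -/
/-!
With `E t = X t - Xstar`, the identity `B = (∑ i, M i) * Xstar` and the fact that the cyclic
indices `t, t - 1, …, t - n + 1` hit every slice exactly once turn the update into
`E (t + 1) = (1 - α Mₜᵀ Mₜ) E t - α ∑_{i ≠ 0} Mₜᵀ M_{t-i} E (t - i)`.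
Since `‖A * E‖_F ≤ ‖A‖₂ ‖E‖_F`, the new error is at most `ρ = κ + α μ (n - 1) < 1` times the
largest of the previous `n` errors, so the error shrinks by the factor `ρ` over every block of
`n` steps.
-/

open Matrix Finset Filter

noncomputable def frobNorm {m k : ℕ} (A : Matrix (Fin m) (Fin k) ℝ) : ℝ :=
  Real.sqrt (∑ i, ∑ j, (A i j) ^ 2)

noncomputable def specNorm {m k : ℕ} (A : Matrix (Fin m) (Fin k) ℝ) : ℝ :=
  ‖LinearMap.toContinuousLinearMap (Matrix.toEuclideanLin A)‖

def idx (n : ℕ) (hn : 0 < n) (a : ℤ) : Fin n :=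
  ⟨(a % (n : ℤ)).toNat, by
    have h1 : (0 : ℤ) < (n : ℤ) := by exact_mod_cast hn
    have h2 := Int.emod_nonneg a h1.ne'
    have h3 := Int.emod_lt_of_pos a h1
    omega⟩

noncomputable def kappaFSD {n N K : ℕ} (hn : 0 < n) (α : ℝ)
    (M : Fin n → Matrix (Fin N) (Fin K) ℝ) : ℝ :=
  Finset.univ.sup' (Finset.univ_nonempty_iff.mpr ⟨⟨0, hn⟩⟩)
    fun i => specNorm ((1 : Matrix (Fin K) (Fin K) ℝ) - α • ((M i)ᵀ * M i))

noncomputable def muFSD {n N K : ℕ} (hn : 2 ≤ n)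
    (M : Fin n → Matrix (Fin N) (Fin K) ℝ) : ℝ :=
  ((Finset.univ : Finset (Fin n × Fin n)).filter fun p => p.1 ≠ p.2).sup'
    ⟨(⟨0, by omega⟩, ⟨1, by omega⟩), by
      refine Finset.mem_filter.mpr ⟨Finset.mem_univ _, ?_⟩
      simp [Fin.ext_iff]⟩
    fun p => specNorm ((M p.1)ᵀ * M p.2)

attribute [local instance] Matrix.frobeniusNormedAddCommGroup Matrix.frobeniusNormedSpace

lemma frobNorm_eq_norm {m k : ℕ} (A : Matrix (Fin m) (Fin k) ℝ) : frobNorm A = ‖A‖ := by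
  rw [frobNorm, Matrix.frobenius_norm_def, ← Real.sqrt_eq_rpow]
  simp only [Real.norm_eq_abs, Real.rpow_two, sq_abs]

lemma specNorm_nonneg {m k : ℕ} (A : Matrix (Fin m) (Fin k) ℝ) : 0 ≤ specNorm A :=
  norm_nonneg _

lemma norm_toLp_mulVec_le_specNorm_mul {m k : ℕ} (A : Matrix (Fin m) (Fin k) ℝ) (v : Fin k → ℝ) :
    ‖WithLp.toLp 2 (A *ᵥ v)‖ ≤ specNorm A * ‖WithLp.toLp 2 v‖ :=
  (LinearMap.toContinuousLinearMap (Matrix.toEuclideanLin A)).le_opNorm (WithLp.toLp 2 v)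

lemma norm_sq_eq_sum_norm_sq_col {m k : ℕ} (A : Matrix (Fin m) (Fin k) ℝ) :
    ‖A‖ ^ 2 = ∑ j, ‖WithLp.toLp 2 (fun i => A i j)‖ ^ 2 := by
  rw [← Matrix.frobenius_norm_transpose]
  change ‖WithLp.toLp 2 fun j => WithLp.toLp 2 fun i => A i j‖ ^ 2 = _
  rw [PiLp.norm_sq_eq_of_L2]

lemma norm_mul_le_specNorm_mul {m k p : ℕ} (A : Matrix (Fin m) (Fin k) ℝ)
    (B : Matrix (Fin k) (Fin p) ℝ) : ‖A * B‖ ≤ specNorm A * ‖B‖ := by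
  refine pow_le_pow_iff_left₀ (norm_nonneg _) (mul_nonneg (specNorm_nonneg A) (norm_nonneg B))
    two_ne_zero |>.mp ?_
  rw [mul_pow, norm_sq_eq_sum_norm_sq_col, norm_sq_eq_sum_norm_sq_col, Finset.mul_sum]
  gcongr with j
  rw [← mul_pow]
  gcongr
  exact norm_toLp_mulVec_le_specNorm_mul A (fun i => B i j)

section CyclicIndex

variable {n : ℕ} (hn : 0 < n)

lemma idx_eq_idx_iff {a b : ℤ} : idx n hn a = idx n hn b ↔ a ≡ b [ZMOD n] := by
  have hval : ∀ c : ℤ, ((idx n hn c : ℕ) : ℤ) = c % n := fun c =>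
    Int.toNat_of_nonneg (Int.emod_nonneg c (by exact_mod_cast hn.ne'))
  rw [Fin.ext_iff, ← Nat.cast_inj (R := ℤ), hval, hval]
  rfl

lemma idx_sub_injective (t : ℤ) : Function.Injective fun i : Fin n => idx n hn (t - i) := by
  intro i j hij
  have hmod := ((idx_eq_idx_iff hn).mp hij).sub_left t
  simp only [sub_sub_cancel] at hmod
  exact Fin.ext (Int.natCast_modEq_iff.mp hmod |>.eq_of_lt_of_lt i.isLt j.isLt)

lemma idx_sub_bijective (t : ℤ) : Function.Bijective fun i : Fin n => idx n hn (t - i) :=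
  Finite.injective_iff_bijective.mp (idx_sub_injective hn t)

lemma idx_sub_ne_idx {t : ℤ} {i : Fin n} (hi : i ≠ ⟨0, hn⟩) : idx n hn (t - i) ≠ idx n hn t := by
  simpa using (idx_sub_injective hn t).ne hi

end CyclicIndex

section WindowContraction

variable {e : ℤ → ℝ} {n : ℕ} {c ρ : ℝ}

lemma le_mul_pow_div_of_window_contraction (hn : 0 < n) (hc : 0 ≤ c) (hρ0 : 0 ≤ ρ)
    (hρ1 : ρ ≤ 1) (hinit : ∀ t ≤ 0, e t ≤ c)
    (hstep : ∀ t ≥ 0, ∀ b, (∀ i : Fin n, e (t - i) ≤ b) → e (t + 1) ≤ ρ * b) (m : ℕ) :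
    e (m - n + 1) ≤ c * ρ ^ (m / n) := by
  induction m using Nat.strong_induction_on with
  | _ m ih =>
    rcases lt_or_ge m n with hmn | hnm
    · rw [Nat.div_eq_of_lt hmn, pow_zero, mul_one]
      exact hinit _ (by omega)
    · have hwindow : ∀ i : Fin n, e ((m - n : ℕ) - i) ≤ c * ρ ^ ((m - n) / n) := by
        intro i
        have hi := i.isLt
        calc e ((m - n : ℕ) - i) = e ((m - 1 - i : ℕ) - n + 1) := by congr 1; omega
          _ ≤ c * ρ ^ ((m - 1 - i) / n) := ih _ (by omega)
          _ ≤ c * ρ ^ ((m - n) / n) := by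
            gcongr c * ?_
            exact pow_le_pow_of_le_one hρ0 hρ1 (Nat.div_le_div_right (by omega))
      calc e (m - n + 1) = e ((m - n : ℕ) + 1) := by congr 1; omega
        _ ≤ ρ * (c * ρ ^ ((m - n) / n)) := hstep _ (by positivity) _ hwindow
        _ = c * ρ ^ (m / n) := by rw [Nat.div_eq_sub_div hn hnm, pow_succ]; ring

lemma tendsto_zero_of_window_contraction (hn : 0 < n) (he : ∀ t, 0 ≤ e t) (hρ0 : 0 ≤ ρ)
    (hρ1 : ρ < 1) (hinit : ∀ t ≤ 0, e t ≤ c)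
    (hstep : ∀ t ≥ 0, ∀ b, (∀ i : Fin n, e (t - i) ≤ b) → e (t + 1) ≤ ρ * b) :
    Tendsto (fun t : ℕ => e t) atTop (nhds 0) := by
  have hc : 0 ≤ c := (he 0).trans (hinit 0 le_rfl)
  have hbound (t : ℕ) : e t ≤ c * ρ ^ ((t + n - 1) / n) := by
    have h := le_mul_pow_div_of_window_contraction hn hc hρ0 hρ1.le hinit hstep (t + n - 1)
    rwa [show ((t + n - 1 : ℕ) : ℤ) - n + 1 = t by omega] at h
  have hexp : Tendsto (fun t : ℕ => (t + n - 1) / n) atTop atTop :=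
    tendsto_atTop_atTop.mpr fun k => ⟨k * n, fun t ht => (Nat.le_div_iff_mul_le hn).mpr (by omega)⟩
  have hgeom : Tendsto (fun k : ℕ => c * ρ ^ k) atTop (nhds 0) := by
    simpa using (tendsto_pow_atTop_nhds_zero_of_lt_one hρ0 hρ1).const_mul c
  exact squeeze_zero (fun t => he t) hbound (hgeom.comp hexp)

end WindowContraction

section FSD

variable {n N K P : ℕ} (M : Fin n → Matrix (Fin N) (Fin K) ℝ)

lemma specNorm_le_kappaFSD (hn : 0 < n) (α : ℝ) (i : Fin n) :
    specNorm (1 - α • ((M i)ᵀ * M i)) ≤ kappaFSD hn α M :=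
  Finset.le_sup' (fun i => specNorm (1 - α • ((M i)ᵀ * M i))) (mem_univ i)

lemma specNorm_le_muFSD (hn : 2 ≤ n) {i j : Fin n} (hij : i ≠ j) :
    specNorm ((M i)ᵀ * M j) ≤ muFSD hn M :=
  Finset.le_sup' (fun p : Fin n × Fin n => specNorm ((M p.1)ᵀ * M p.2))
    (mem_filter.mpr ⟨mem_univ (i, j), hij⟩)

lemma kappaFSD_nonneg (hn : 0 < n) (α : ℝ) : 0 ≤ kappaFSD hn α M :=
  (specNorm_nonneg _).trans (specNorm_le_kappaFSD M hn α ⟨0, hn⟩)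

lemma muFSD_nonneg (hn : 2 ≤ n) : 0 ≤ muFSD hn M :=
  (specNorm_nonneg _).trans (specNorm_le_muFSD M hn (i := ⟨0, by omega⟩) (j := ⟨1, hn⟩) (by simp))

variable (hn : 0 < n) (Xstar : Matrix (Fin K) (Fin P) ℝ) (X : ℤ → Matrix (Fin K) (Fin P) ℝ)

lemma sum_mul_sub_sum_idx_sub_mul (t : ℤ) :
    (∑ i, M i) * Xstar - ∑ i : Fin n, M (idx n hn (t - i)) * X (t - i) =
      -∑ i : Fin n, M (idx n hn (t - i)) * (X (t - i) - Xstar) := by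
  rw [Matrix.sum_mul, ← (idx_sub_bijective hn t).sum_comp (fun j => M j * Xstar),
    ← sum_sub_distrib, ← sum_neg_distrib]
  refine sum_congr rfl fun i _ => ?_
  rw [Matrix.mul_sub]
  abel

lemma fsd_error_succ {α : ℝ} {R : ℤ → Matrix (Fin N) (Fin P) ℝ} {t : ℤ}
    (hR : R (t + 1) = (∑ i, M i) * Xstar - ∑ i : Fin n, M (idx n hn (t - i)) * X (t - i))
    (hX : X (t + 1) = X t + α • ((M (idx n hn t))ᵀ * R (t + 1))) :
    X (t + 1) - Xstar =
      (1 - α • ((M (idx n hn t))ᵀ * M (idx n hn t))) * (X t - Xstar) -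
        α • ∑ i ∈ univ.erase (⟨0, hn⟩ : Fin n),
          (M (idx n hn t))ᵀ * M (idx n hn (t - i)) * (X (t - i) - Xstar) := by
  rw [hX, hR, sum_mul_sub_sum_idx_sub_mul, Matrix.mul_neg, Matrix.mul_sum,
    ← add_sum_erase _ _ (mem_univ ⟨0, hn⟩)]
  simp only [Nat.cast_zero, sub_zero, Matrix.mul_assoc, Matrix.sub_mul,
    Matrix.one_mul, Matrix.smul_mul]
  rw [smul_neg, smul_add]
  abel

end FSD

lemma norm_fsd_error_succ_le {n N K P : ℕ} (hn : 2 ≤ n) (M : Fin n → Matrix (Fin N) (Fin K) ℝ)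
    (Xstar : Matrix (Fin K) (Fin P) ℝ) (X : ℤ → Matrix (Fin K) (Fin P) ℝ)
    (R : ℤ → Matrix (Fin N) (Fin P) ℝ) {α : ℝ} (hα : 0 ≤ α) {t : ℤ}
    (hR : R (t + 1) =
      (∑ i, M i) * Xstar - ∑ i : Fin n, M (idx n (by omega) (t - i)) * X (t - i))
    (hX : X (t + 1) = X t + α • ((M (idx n (by omega) t))ᵀ * R (t + 1))) :
    ‖X (t + 1) - Xstar‖ ≤ kappaFSD (by omega) α M * ‖X t - Xstar‖ +
      α * muFSD hn M * ∑ i ∈ univ.erase (⟨0, by omega⟩ : Fin n), ‖X (t - i) - Xstar‖ := by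
  have hn0 : 0 < n := by omega
  rw [fsd_error_succ M hn0 Xstar X hR hX]
  refine (norm_sub_le _ _).trans (add_le_add ?_ ?_)
  · exact (norm_mul_le_specNorm_mul _ _).trans <|
      mul_le_mul_of_nonneg_right (specNorm_le_kappaFSD M hn0 α _) (norm_nonneg _)
  · rw [norm_smul, Real.norm_of_nonneg hα, mul_assoc, mul_sum]
    refine mul_le_mul_of_nonneg_left ((norm_sum_le _ _).trans (sum_le_sum fun i hi => ?_)) hα
    refine (norm_mul_le_specNorm_mul _ _).trans <|
      mul_le_mul_of_nonneg_right (specNorm_le_muFSD M hn ?_) (norm_nonneg _)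
    exact (idx_sub_ne_idx hn0 (ne_of_mem_erase hi)).symm

theorem fsd_cyclic_convergence
    {n N K P : ℕ} (hn : 2 ≤ n)
    (M : Fin n → Matrix (Fin N) (Fin K) ℝ)
    (Xstar : Matrix (Fin K) (Fin P) ℝ)
    (B : Matrix (Fin N) (Fin P) ℝ) (hB : B = (∑ i, M i) * Xstar)
    (α : ℝ) (hα : 0 < α)
    (X : ℤ → Matrix (Fin K) (Fin P) ℝ) (R : ℤ → Matrix (Fin N) (Fin P) ℝ)
    (hX0 : ∀ t : ℤ, t ≤ 0 → X t = 0)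
    (hR : ∀ t : ℤ, 0 ≤ t →
      R (t + 1) = B - ∑ i : Fin n, M (idx n (by omega) (t - ((i : ℕ) : ℤ))) * X (t - ((i : ℕ) : ℤ)))
    (hXstep : ∀ t : ℤ, 0 ≤ t →
      X (t + 1) = X t + α • ((M (idx n (by omega) t))ᵀ * R (t + 1)))
    (hrate : kappaFSD (show 0 < n by omega) α M + α * muFSD hn M * ((n : ℝ) - 1) < 1) :
    Filter.Tendsto (fun t : ℕ => frobNorm (X (t : ℤ) - Xstar)) Filter.atTop (nhds 0) := by
  subst hB
  have hn0 : 0 < n := by omega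
  set κ := kappaFSD hn0 α M
  set μ := muFSD hn M
  have hκ : 0 ≤ κ := kappaFSD_nonneg M hn0 α
  have hαμ : 0 ≤ α * μ := mul_nonneg hα.le (muFSD_nonneg M hn)
  have hρ0 : 0 ≤ κ + α * μ * ((n : ℝ) - 1) :=
    add_nonneg hκ (mul_nonneg hαμ (sub_nonneg.mpr (Nat.one_le_cast.mpr hn0)))
  have hstep : ∀ t ≥ 0, ∀ b, (∀ i : Fin n, ‖X (t - i) - Xstar‖ ≤ b) →
      ‖X (t + 1) - Xstar‖ ≤ (κ + α * μ * ((n : ℝ) - 1)) * b := by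
    intro t ht b hb
    calc ‖X (t + 1) - Xstar‖
        ≤ κ * ‖X t - Xstar‖ + α * μ * ∑ i ∈ univ.erase (⟨0, hn0⟩ : Fin n), ‖X (t - i) - Xstar‖ :=
          norm_fsd_error_succ_le hn M Xstar X R hα.le (hR t ht) (hXstep t ht)
      _ ≤ κ * b + α * μ * ∑ i ∈ univ.erase (⟨0, hn0⟩ : Fin n), b := by
          gcongr with i
          · simpa using hb ⟨0, hn0⟩
          · exact hb i
      _ = (κ + α * μ * ((n : ℝ) - 1)) * b := by
          rw [sum_const, card_erase_of_mem (mem_univ _), card_univ, Fintype.card_fin,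
            nsmul_eq_mul, Nat.cast_sub (by omega), Nat.cast_one]
          ring
  simp_rw [frobNorm_eq_norm]
  exact tendsto_zero_of_window_contraction (e := fun s => ‖X s - Xstar‖) hn0
    (fun _ => norm_nonneg _) hρ0 hrate (fun t ht => by rw [hX0 t ht, zero_sub, norm_neg]) hstep
end

section
/- (Lemma C.3 of the paper.) Suppose in addition that 0 < κ and κ + α·μ·(n−1) < 1. Then the sequence of bounding coefficients is strictly decreasing: ε_{t+1} < ε_t for every integer t ≥ 0. -/
open Matrix Finset Filter

/-!
Unrolling the convolution in the definition of `ε` gives the one-step recursion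
`ε (t + 1) = κ ε t + α μ ∑_{i=1}^{n-1} ε (t - i)`, whose coefficients are nonnegative.
Hence, by strong induction, `ε (t + 1) - ε t` is a nonnegative combination of earlier
differences, all `≤ 0` (those at negative times vanish since `ε` is constant there), plus
`κ (ε t - ε (t - 1)) < 0`. The base case `ε 1 = κ + α μ (n - 1) < 1 = ε 0` is the rate condition.
-/

section VariationOfConstants

variable {κ c : ℝ} {x g : ℤ → ℝ}

theorem eq_variation_of_constants_natCast (h0 : x 0 = 1)
    (hx : ∀ t : ℤ, 1 ≤ t →
      x t = κ ^ t.toNat + c * ∑ j ∈ range t.toNat, κ ^ j * g (t - 1 - j)) (m : ℕ) :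
    x m = κ ^ m + c * ∑ j ∈ range m, κ ^ j * g (m - 1 - j) := by
  rcases m with _ | m
  · simp [h0]
  · simpa using hx (m + 1) (by omega)

theorem succ_eq_of_variation_of_constants (h0 : x 0 = 1)
    (hx : ∀ t : ℤ, 1 ≤ t →
      x t = κ ^ t.toNat + c * ∑ j ∈ range t.toNat, κ ^ j * g (t - 1 - j)) (m : ℕ) :
    x (m + 1) = κ * x m + c * g m := by
  have hsucc := eq_variation_of_constants_natCast h0 hx (m + 1)
  push_cast at hsucc
  have hshift : ∑ j ∈ range m, κ ^ (j + 1) * g (m + 1 - 1 - (j + 1 : ℕ))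
      = κ * ∑ j ∈ range m, κ ^ j * g (m - 1 - j) := by
    rw [mul_sum]
    refine sum_congr rfl fun j _ => ?_
    rw [pow_succ, Nat.cast_succ, show (m : ℤ) + 1 - 1 - (j + 1) = m - 1 - j by ring]
    ring
  rw [hsucc, eq_variation_of_constants_natCast h0 hx m, sum_range_succ', hshift]
  simp only [pow_zero, one_mul, Nat.cast_zero, add_sub_cancel_right, sub_zero]
  ring

end VariationOfConstants

theorem succ_lt_of_lag_recursion {κ c : ℝ} {x : ℤ → ℝ} {S : Finset ℕ}
    (hκ : 0 < κ) (hc : 0 ≤ c)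
    (hS : ∀ i ∈ S, 1 ≤ i) (hconst : ∀ t : ℤ, t ≤ 0 → x t = x 0)
    (hrec : ∀ m : ℕ, x (m + 1) = κ * x m + c * ∑ i ∈ S, x (m - i)) (hbase : x 1 < x 0)
    (m : ℕ) : x (m + 1) < x m := by
  induction m using Nat.strong_induction_on with
  | _ m ih =>
    rcases m with _ | k
    · simpa using hbase
    · have hlag : ∀ i ∈ S, x ((k : ℤ) + 1 - i) ≤ x (k - i) := by
        intro i hi
        have hi1 := hS i hi
        by_cases hneg : (k : ℤ) + 1 - i ≤ 0
        · rw [hconst _ hneg, hconst ((k : ℤ) - i) (by omega)]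
        · obtain ⟨j, hj⟩ : ∃ j : ℕ, (k : ℤ) - i = j :=
            ⟨_, (Int.toNat_of_nonneg (by omega)).symm⟩
          rw [show (k : ℤ) + 1 - i = j + 1 by omega, hj]
          exact (ih j (by omega)).le
      push_cast
      calc x (k + 1 + 1) = κ * x (k + 1) + c * ∑ i ∈ S, x ((k : ℤ) + 1 - i) :=
            mod_cast hrec (k + 1)
        _ < κ * x k + c * ∑ i ∈ S, x (k - i) :=
          add_lt_add_of_lt_of_le (mul_lt_mul_of_pos_left (ih k k.lt_succ_self) hκ)
            (mul_le_mul_of_nonneg_left (sum_le_sum hlag) hc)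
        _ = x (k + 1) := (hrec k).symm

theorem eps_strictly_decreasing_general
    (n : ℕ) (hn : 2 ≤ n) (κ μ α : ℝ) (hμ : 0 ≤ μ) (hα : 0 ≤ α)
    (hκpos : 0 < κ) (hrate : κ + α * μ * ((n : ℝ) - 1) < 1)
    (ε : ℤ → ℝ)
    (hε0 : ∀ t : ℤ, t ≤ 0 → ε t = 1)
    (hεrec : ∀ t : ℤ, 1 ≤ t →
      ε t = κ ^ t.toNat + α * μ * ∑ j ∈ Finset.range t.toNat, κ ^ j *
          ∑ i ∈ Finset.Icc 1 (n - 1), ε (t - 1 - (j : ℤ) - (i : ℤ))) :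
    ∀ t : ℤ, 0 ≤ t → ε (t + 1) < ε t := by
  have hε00 : ε 0 = 1 := hε0 0 le_rfl
  have hrec := succ_eq_of_variation_of_constants
    (g := fun s => ∑ i ∈ Icc 1 (n - 1), ε (s - i)) hε00 hεrec
  have hbase : ε 1 < ε 0 := by
    have hpast : ∑ i ∈ Icc 1 (n - 1), ε (0 - i) = n - 1 := by
      rw [sum_congr rfl fun i hi => hε0 _ (by simp only [mem_Icc] at hi; omega)]
      simp [Nat.cast_sub (by omega : 1 ≤ n)]
    have h1 := hrec 0
    simp only [Nat.cast_zero, zero_add] at h1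
    rw [h1, hε00, hpast]
    linarith
  intro t ht
  lift t to ℕ using ht
  exact succ_lt_of_lag_recursion hκpos (mul_nonneg hα hμ) (fun i hi => (mem_Icc.1 hi).1)
    (fun t ht => by rw [hε0 t ht, hε00]) hrec hbase t

theorem eps_strictly_decreasing
    (n : ℕ) (hn : 2 ≤ n) (κ μ α : ℝ) (hκ : 0 ≤ κ) (hμ : 0 ≤ μ) (hα : 0 ≤ α)
    (hκpos : 0 < κ) (hrate : κ + α * μ * ((n : ℝ) - 1) < 1)
    (ε : ℤ → ℝ)
    (hε0 : ∀ t : ℤ, t ≤ 0 → ε t = 1)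
    (hεrec : ∀ t : ℤ, 1 ≤ t →
      ε t = κ ^ t.toNat + α * μ * ∑ j ∈ Finset.range t.toNat, κ ^ j *
          ∑ i ∈ Finset.Icc 1 (n - 1), ε (t - 1 - (j : ℤ) - (i : ℤ))) :
    ∀ t : ℤ, 0 ≤ t → ε (t + 1) < ε t :=
  eps_strictly_decreasing_general n hn κ μ α hμ hα hκpos hrate ε hε0 hεrec
end

section
/- In the matrix FSD setup with n = 2 slices M_0, M_1, set κ_1 = ‖I_K − α·M_0ᵀM_0‖₂, κ_2 = ‖I_K − α·M_1ᵀM_1‖₂ and μ = ‖M_0ᵀM_1‖₂ (which equals ‖M_1ᵀM_0‖₂). Then for every integer k ≥ 1, the errors satisfy the two interleaved recursions E(2k) ≤ κ_2·E(2k−1) + α·μ·E(2k−2) and E(2k+1) ≤ κ_1·E(2k) + α·μ·E(2k−1). (Equations (B.7)–(B.8) of the paper, the key recursions in the proof of Theorem 4.3.) -/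
open Matrix Finset Filter

/-!
With `B = (M a + M b) X*`, where `a = t mod 2` and `b = (t - 1) mod 2`, one FSD step is linear in the
two previous errors: `X(t+1) - X* = (I - α M_aᵀ M_a)(X(t) - X*) - α M_aᵀ M_b (X(t-1) - X*)`.
The recursions follow from the triangle inequality and `‖A B‖_F ≤ ‖A‖₂ ‖B‖_F`, the latter applied
column by column; `‖M_0ᵀ M_1‖₂ = ‖M_1ᵀ M_0‖₂` because the spectral norm is invariant under
transposition.
-/

section Norms

variable {m k p : ℕ}

lemma specNorm_eq_l2_opNorm (A : Matrix (Fin m) (Fin k) ℝ) :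
    open scoped Matrix.Norms.L2Operator in specNorm A = ‖A‖ := rfl

lemma specNorm_transpose (A : Matrix (Fin m) (Fin k) ℝ) : specNorm Aᵀ = specNorm A := by
  open scoped Matrix.Norms.L2Operator in
  simpa only [specNorm_eq_l2_opNorm, conjTranspose_eq_transpose_of_trivial] using
    l2_opNorm_conjTranspose A

lemma frobNorm_eq_frobenius_norm (A : Matrix (Fin m) (Fin k) ℝ) :
    open scoped Matrix.Norms.Frobenius in frobNorm A = ‖A‖ := by
  open scoped Matrix.Norms.Frobenius in
  simp only [frobNorm, frobenius_norm_def, Real.sqrt_eq_rpow, Real.norm_eq_abs,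
    Real.rpow_two, sq_abs]

lemma frobNorm_sq_eq_sum_col (A : Matrix (Fin m) (Fin k) ℝ) :
    frobNorm A ^ 2 = ∑ j, ‖(EuclideanSpace.equiv (Fin m) ℝ).symm (Aᵀ j)‖ ^ 2 := by
  rw [frobNorm, Real.sq_sqrt (by positivity), Finset.sum_comm]
  simp [EuclideanSpace.norm_sq_eq]

lemma frobNorm_mul_le (A : Matrix (Fin m) (Fin k) ℝ) (B : Matrix (Fin k) (Fin p) ℝ) :
    frobNorm (A * B) ≤ specNorm A * frobNorm B := by
  open scoped Matrix.Norms.L2Operator in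
  have hcol : ∀ j, ‖(EuclideanSpace.equiv (Fin m) ℝ).symm ((A * B)ᵀ j)‖ ^ 2 ≤
      specNorm A ^ 2 * ‖(EuclideanSpace.equiv (Fin k) ℝ).symm (Bᵀ j)‖ ^ 2 := by
    intro j
    rw [← mul_pow, specNorm_eq_l2_opNorm]
    have hmulVec : (A * B)ᵀ j = A *ᵥ Bᵀ j := by
      ext i; simp [mul_apply, mulVec, dotProduct]
    rw [hmulVec]
    gcongr
    exact l2_opNorm_mulVec A _
  have hsq : frobNorm (A * B) ^ 2 ≤ (specNorm A * frobNorm B) ^ 2 := by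
    rw [mul_pow, frobNorm_sq_eq_sum_col, frobNorm_sq_eq_sum_col, Finset.mul_sum]
    exact Finset.sum_le_sum fun j _ => hcol j
  exact (pow_le_pow_iff_left₀ (Real.sqrt_nonneg _)
    (mul_nonneg (norm_nonneg _) (Real.sqrt_nonneg _)) two_ne_zero).1 hsq

lemma frobNorm_sub_smul_le (A B : Matrix (Fin m) (Fin k) ℝ) {α : ℝ} (hα : 0 ≤ α) :
    frobNorm (A - α • B) ≤ frobNorm A + α * frobNorm B := by
  open scoped Matrix.Norms.Frobenius in
  simpa only [frobNorm_eq_frobenius_norm, norm_smul, Real.norm_of_nonneg hα] using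
    norm_sub_le A (α • B)

end Norms

lemma idx_eq_of_emod_eq {n : ℕ} (hn : 0 < n) (a : ℤ) (b : Fin n) (h : a % n = b) :
    idx n hn a = b :=
  Fin.ext (by simp [idx, h])

section Update

variable {N K P : ℕ} (A C : Matrix (Fin N) (Fin K) ℝ) (Xstar Y Z : Matrix (Fin K) (Fin P) ℝ)
  {α : ℝ}

lemma fsd_update_sub_eq :
    Y + α • (Aᵀ * ((A + C) * Xstar - (A * Y + C * Z))) - Xstar =
      (1 - α • (Aᵀ * A)) * (Y - Xstar) - α • (Aᵀ * C * (Z - Xstar)) := by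
  simp only [Matrix.mul_sub, Matrix.mul_add, Matrix.add_mul, Matrix.sub_mul, Matrix.one_mul,
    smul_sub, smul_add, Matrix.smul_mul, Matrix.mul_assoc]
  abel

lemma frobNorm_fsd_update_sub_le (hα : 0 ≤ α) :
    frobNorm (Y + α • (Aᵀ * ((A + C) * Xstar - (A * Y + C * Z))) - Xstar) ≤
      specNorm (1 - α • (Aᵀ * A)) * frobNorm (Y - Xstar) +
        α * specNorm (Aᵀ * C) * frobNorm (Z - Xstar) := by
  rw [fsd_update_sub_eq]
  calc _ ≤ frobNorm ((1 - α • (Aᵀ * A)) * (Y - Xstar)) + α * frobNorm (Aᵀ * C * (Z - Xstar)) :=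
        frobNorm_sub_smul_le _ _ hα
    _ ≤ _ := by
        rw [mul_assoc α]
        gcongr <;> exact frobNorm_mul_le _ _

end Update

lemma fsd_two_slice_step {N K P : ℕ} (M : Fin 2 → Matrix (Fin N) (Fin K) ℝ)
    (B : Matrix (Fin N) (Fin P) ℝ) (α : ℝ)
    (X : ℤ → Matrix (Fin K) (Fin P) ℝ) (R : ℤ → Matrix (Fin N) (Fin P) ℝ)
    (hR : ∀ t : ℤ, 0 ≤ t →
      R (t + 1) = B - ∑ i : Fin 2, M (idx 2 two_pos (t - ((i : ℕ) : ℤ))) * X (t - ((i : ℕ) : ℤ)))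
    (hXstep : ∀ t : ℤ, 0 ≤ t →
      X (t + 1) = X t + α • ((M (idx 2 two_pos t))ᵀ * R (t + 1)))
    {t : ℤ} (ht : 0 ≤ t) :
    X (t + 1) = X t + α • ((M (idx 2 two_pos t))ᵀ *
      (B - (M (idx 2 two_pos t) * X t + M (idx 2 two_pos (t - 1)) * X (t - 1)))) := by
  rw [hXstep t ht, hR t ht, Fin.sum_univ_two]
  simp

theorem fsd_two_slice_interleaved_recursions
    {N K P : ℕ}
    (M : Fin 2 → Matrix (Fin N) (Fin K) ℝ)
    (Xstar : Matrix (Fin K) (Fin P) ℝ)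
    (B : Matrix (Fin N) (Fin P) ℝ) (hB : B = (∑ i, M i) * Xstar)
    (α : ℝ) (hα : 0 < α)
    (X : ℤ → Matrix (Fin K) (Fin P) ℝ) (R : ℤ → Matrix (Fin N) (Fin P) ℝ)
    (hR : ∀ t : ℤ, 0 ≤ t →
      R (t + 1) = B - ∑ i : Fin 2, M (idx 2 (by omega) (t - ((i : ℕ) : ℤ))) * X (t - ((i : ℕ) : ℤ)))
    (hXstep : ∀ t : ℤ, 0 ≤ t →
      X (t + 1) = X t + α • ((M (idx 2 (by omega) t))ᵀ * R (t + 1))) :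
    specNorm ((M 0)ᵀ * M 1) = specNorm ((M 1)ᵀ * M 0) ∧
      ∀ k : ℤ, 1 ≤ k →
        frobNorm (X (2 * k) - Xstar) ≤
            specNorm ((1 : Matrix (Fin K) (Fin K) ℝ) - α • ((M 1)ᵀ * M 1)) *
                frobNorm (X (2 * k - 1) - Xstar) +
              α * specNorm ((M 0)ᵀ * M 1) * frobNorm (X (2 * k - 2) - Xstar) ∧
          frobNorm (X (2 * k + 1) - Xstar) ≤
            specNorm ((1 : Matrix (Fin K) (Fin K) ℝ) - α • ((M 0)ᵀ * M 0)) *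
                frobNorm (X (2 * k) - Xstar) +
              α * specNorm ((M 0)ᵀ * M 1) * frobNorm (X (2 * k - 1) - Xstar) := by
  have hspec : specNorm ((M 0)ᵀ * M 1) = specNorm ((M 1)ᵀ * M 0) := by
    rw [← specNorm_transpose, transpose_mul, transpose_transpose]
  have hB01 : B = (M 0 + M 1) * Xstar := by rw [hB, Fin.sum_univ_two]
  refine ⟨hspec, fun k hk => ⟨?_, ?_⟩⟩
  · have hstep := fsd_two_slice_step M B α X R hR hXstep (t := 2 * k - 1) (by omega)
    rw [sub_add_cancel, idx_eq_of_emod_eq _ _ 1 (by omega), idx_eq_of_emod_eq _ _ 0 (by omega),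
      hB01, add_comm (M 0), show 2 * k - 1 - 1 = 2 * k - 2 by ring] at hstep
    rw [hstep, hspec]
    exact frobNorm_fsd_update_sub_le _ _ _ _ _ hα.le
  · have hstep := fsd_two_slice_step M B α X R hR hXstep (t := 2 * k) (by omega)
    rw [idx_eq_of_emod_eq _ _ 0 (by omega), idx_eq_of_emod_eq _ _ 1 (by omega), hB01] at hstep
    rw [hstep]
    exact frobNorm_fsd_update_sub_le _ _ _ _ _ hα.le
end
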